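/- Fix b > 0. Let φ_δ(s) = (1/(2δ)) 1{|s| ≤ δ}, and for each 0<δ<1 let ψ_δ:ℝ→[0,1/(2δ)] be a continuous function with ψ_δ(s) = 1/(2δ) for |s| ≤ δ − δ² and ψ_δ(s) = 0 for |s| ≥ δ + δ²; set φ_{r,δ}(s) = φ_δ(s−r) and ψ_{r,δ}(s) = ψ_δ(s−r). Then there exists a finite constant C = C(b) such that for every δ ∈ (0, b/2): limsup_{T→∞} sup_{2δ ≤ r ≤ b} sup_{η ∈ {0,1}^{ℤ²}} | ∫ φ_{r,δ} dμ^{1,T}(η) − ∫ ψ_{r,δ} dμ^{1,T}(η) | ≤ C δ. -/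
import Mathlib


open MeasureTheory Set Filter
open scoped Classical

noncomputable section

/-- Square of the Euclidean norm of a point of `ℤ²`. -/
def nsq (x : ℤ × ℤ) : ℝ := ((x.1 : ℝ)) ^ 2 + ((x.2 : ℝ)) ^ 2

/-- Euclidean norm of a point of `ℤ²`. -/
def enorm2 (x : ℤ × ℤ) : ℝ := Real.sqrt (nsq x)

/-- `σ_T(x) = log |x| / log T`. -/
def sig (T : ℝ) (x : ℤ × ℤ) : ℝ := Real.log (enorm2 x) / Real.log T

/-- Integral of `f` against the polar empirical measure `μ^{1,T}(η)`:
`(1/(2π log T)) Σ_{x ≠ 0} η(x) f(σ_T(x)) / |x|²`. -/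
def polarInt (T : ℝ) (η : ℤ × ℤ → ℝ) (f : ℝ → ℝ) : ℝ :=
  (1 / (2 * Real.pi * Real.log T)) *
    ∑' x : ℤ × ℤ, if x ≠ 0 then η x * f (sig T x) / nsq x else 0

lemma nsq_nonneg (x : ℤ × ℤ) : 0 ≤ nsq x := by unfold nsq; positivity
lemma enorm2_nonneg (x : ℤ × ℤ) : 0 ≤ enorm2 x := Real.sqrt_nonneg _
lemma one_le_nsq {x : ℤ × ℤ} (hx : x ≠ 0) : 1 ≤ nsq x := by
  have hor : x.1 ≠ 0 ∨ x.2 ≠ 0 := by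
    by_contra h
    push_neg at h
    exact hx (Prod.ext h.1 h.2)
  rcases hor with h | h
  · have h1 : (1:ℤ) ≤ x.1^2 := by
      rcases h.lt_or_gt with h' | h' <;> nlinarith
    have h2 : (1:ℝ) ≤ (x.1:ℝ)^2 := by exact_mod_cast h1
    have := sq_nonneg ((x.2:ℝ)); unfold nsq; nlinarith
  · have h1 : (1:ℤ) ≤ x.2^2 := by
      rcases h.lt_or_gt with h' | h' <;> nlinarith
    have h2 : (1:ℝ) ≤ (x.2:ℝ)^2 := by exact_mod_cast h1
    have := sq_nonneg ((x.1:ℝ)); unfold nsq; nlinarith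
lemma enorm2_sq (x : ℤ × ℤ) : (enorm2 x)^2 = nsq x := Real.sq_sqrt (nsq_nonneg x)
lemma one_le_enorm2 {x : ℤ × ℤ} (hx : x ≠ 0) : 1 ≤ enorm2 x := by
  nlinarith [one_le_nsq hx, enorm2_sq x, enorm2_nonneg x]
lemma abs_fst_le (x : ℤ × ℤ) : |(x.1:ℝ)| ≤ enorm2 x := by
  have h : (x.1:ℝ)^2 ≤ (enorm2 x)^2 := by rw [enorm2_sq]; unfold nsq; nlinarith [sq_nonneg ((x.2:ℝ))]
  exact abs_le.mpr (abs_le_of_sq_le_sq' h (enorm2_nonneg x))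
lemma abs_snd_le (x : ℤ × ℤ) : |(x.2:ℝ)| ≤ enorm2 x := by
  have h : (x.2:ℝ)^2 ≤ (enorm2 x)^2 := by rw [enorm2_sq]; unfold nsq; nlinarith [sq_nonneg ((x.1:ℝ))]
  exact abs_le.mpr (abs_le_of_sq_le_sq' h (enorm2_nonneg x))

/-- Lattice points in the annulus `A ≤ |x| ≤ B`. -/
def annulus (A B : ℝ) : Finset (ℤ × ℤ) :=
  (Finset.Icc (-(⌈B⌉₊:ℤ), -(⌈B⌉₊:ℤ)) ((⌈B⌉₊:ℤ), (⌈B⌉₊:ℤ))).filter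
    (fun x => A ≤ enorm2 x ∧ enorm2 x ≤ B)

lemma mem_annulus {A B : ℝ} {x : ℤ × ℤ} (h1 : A ≤ enorm2 x) (h2 : enorm2 x ≤ B) :
    x ∈ annulus A B := by
  have hB : B ≤ (⌈B⌉₊:ℝ) := Nat.le_ceil B
  have h1' : |(x.1:ℝ)| ≤ ((⌈B⌉₊:ℤ):ℝ) := by
    push_cast; linarith [abs_fst_le x]
  have h2' : |(x.2:ℝ)| ≤ ((⌈B⌉₊:ℤ):ℝ) := by
    push_cast; linarith [abs_snd_le x]
  have h1'' : |x.1| ≤ (⌈B⌉₊:ℤ) := by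
    exact_mod_cast h1'
  have h2'' : |x.2| ≤ (⌈B⌉₊:ℤ) := by
    exact_mod_cast h2'
  rw [annulus, Finset.mem_filter, Finset.mem_Icc]
  refine ⟨⟨⟨?_, ?_⟩, ⟨?_, ?_⟩⟩, h1, h2⟩ <;>
    simp only [] <;> [skip; skip; skip; skip] <;> first
      | linarith [abs_le.mp h1''] | linarith [abs_le.mp h2'']

lemma mem_annulus_iff {A B : ℝ} {x : ℤ × ℤ} :
    x ∈ annulus A B ↔ A ≤ enorm2 x ∧ enorm2 x ≤ B := by
  constructor
  · intro h
    rw [annulus, Finset.mem_filter] at h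
    exact h.2
  · intro ⟨h1, h2⟩; exact mem_annulus h1 h2

lemma annulus_sum_le (A B : ℝ) (hA : 1 ≤ A) (hAB : A ≤ B) :
    ∑ x ∈ annulus A B, (nsq x)⁻¹ ≤ 128 * (Real.log (B / A) + 1) := by
  have h2 : (1:ℝ) < 2 := one_lt_two
  have hApos : (0:ℝ) < A := by linarith
  have hBpos : (0:ℝ) < B := by linarith
  set k₀ := ⌊Real.logb 2 A⌋₊ with hk₀
  set k₁ := ⌊Real.logb 2 B⌋₊ with hk₁
  have hk01 : k₀ ≤ k₁ :=
    Nat.floor_le_floor (Real.logb_le_logb_of_le h2 hApos hAB)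
  set t := Finset.Icc k₀ k₁ with ht
  have hmaps : ∀ x ∈ annulus A B, ⌊Real.logb 2 (enorm2 x)⌋₊ ∈ t := by
    intro x hx
    rw [mem_annulus_iff] at hx
    rw [ht, Finset.mem_Icc]
    constructor
    · exact Nat.floor_le_floor (Real.logb_le_logb_of_le h2 hApos hx.1)
    · exact Nat.floor_le_floor
        (Real.logb_le_logb_of_le h2 (lt_of_lt_of_le hApos hx.1) hx.2)
  rw [← Finset.sum_fiberwise_of_maps_to hmaps (fun x => (nsq x)⁻¹)]
  have hinner : ∀ k ∈ t,
      (∑ x ∈ (annulus A B).filter (fun x => ⌊Real.logb 2 (enorm2 x)⌋₊ = k), (nsq x)⁻¹)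
        ≤ 64 := by
    intro k _
    set F := (annulus A B).filter (fun x => ⌊Real.logb 2 (enorm2 x)⌋₊ = k) with hF
    have hbound : ∀ x ∈ F, (nsq x)⁻¹ ≤ ((4:ℝ)^k)⁻¹ := by
      intro x hx
      rw [hF, Finset.mem_filter, mem_annulus_iff] at hx
      have he1 : 1 ≤ enorm2 x := le_trans hA hx.1.1
      have hepos : 0 < enorm2 x := by linarith
      have hlogb : (k:ℝ) ≤ Real.logb 2 (enorm2 x) := by
        rw [← hx.2]
        exact Nat.floor_le (Real.logb_nonneg h2 he1)
      have hge : (2:ℝ)^(k:ℝ) ≤ enorm2 x := by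
        calc (2:ℝ)^(k:ℝ) ≤ (2:ℝ)^(Real.logb 2 (enorm2 x)) :=
              (Real.rpow_le_rpow_left_iff h2).mpr hlogb
          _ = enorm2 x := Real.rpow_logb two_pos (by norm_num) hepos
      have hge' : (2:ℝ)^k ≤ enorm2 x := by rwa [Real.rpow_natCast] at hge
      have hnsq : (4:ℝ)^k ≤ nsq x := by
        rw [← enorm2_sq]
        calc (4:ℝ)^k = ((2:ℝ)^2)^k := by norm_num
          _ = ((2:ℝ)^k)^2 := by rw [← pow_mul, ← pow_mul, mul_comm]
          _ ≤ (enorm2 x)^2 := by nlinarith [pow_pos (two_pos (α := ℝ)) k]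
      exact inv_anti₀ (by positivity) hnsq
    have hsub : F ⊆ Finset.Icc (-(2^(k+1):ℤ), -(2^(k+1):ℤ)) ((2^(k+1):ℤ), (2^(k+1):ℤ)) := by
      intro x hx
      rw [hF, Finset.mem_filter, mem_annulus_iff] at hx
      have he1 : 1 ≤ enorm2 x := le_trans hA hx.1.1
      have hepos : 0 < enorm2 x := by linarith
      have hlt : Real.logb 2 (enorm2 x) < (k:ℝ) + 1 := by
        rw [← hx.2]; exact Nat.lt_floor_add_one _
      have hub : enorm2 x < (2:ℝ)^(k+1) := by
        have : enorm2 x < (2:ℝ)^((k:ℝ)+1) := by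
          calc enorm2 x = (2:ℝ)^(Real.logb 2 (enorm2 x)) :=
                (Real.rpow_logb two_pos (by norm_num) hepos).symm
            _ < (2:ℝ)^((k:ℝ)+1) := (Real.rpow_lt_rpow_left_iff h2).mpr hlt
        have hc : ((k:ℝ)+1) = ((k+1 : ℕ):ℝ) := by push_cast; ring
        rwa [hc, Real.rpow_natCast] at this
      have h1 : |(x.1:ℝ)| ≤ (2:ℝ)^(k+1) := le_of_lt (lt_of_le_of_lt (abs_fst_le x) hub)
      have h2' : |(x.2:ℝ)| ≤ (2:ℝ)^(k+1) := le_of_lt (lt_of_le_of_lt (abs_snd_le x) hub)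
      have h1' : |x.1| ≤ (2^(k+1):ℤ) := by exact_mod_cast h1
      have h2'' : |x.2| ≤ (2^(k+1):ℤ) := by exact_mod_cast h2'
      rw [Finset.mem_Icc, Prod.mk_le_mk, Prod.mk_le_mk]
      exact ⟨⟨by linarith [abs_le.mp h1'], by linarith [abs_le.mp h2'']⟩,
        ⟨(abs_le.mp h1').2, (abs_le.mp h2'').2⟩⟩
    have hcard : (F.card : ℝ) ≤ 64 * 4^k := by
      have hpos : (0:ℤ) ≤ 2^(k+2)+1 := by positivity
      have hZ : (F.card : ℤ) ≤ (2^(k+2)+1) * (2^(k+2)+1) := by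
        have h := Finset.card_le_card hsub
        rw [Finset.card_Icc_prod] at h
        simp only [Int.card_Icc] at h
        have hnn : ((2^(k+1):ℤ) + 1 - -(2^(k+1):ℤ)) = 2^(k+2) + 1 := by ring
        rw [hnn] at h
        calc (F.card:ℤ) ≤ ((((2:ℤ)^(k+2)+1)).toNat * (((2:ℤ)^(k+2)+1)).toNat : ℕ) := by
              exact_mod_cast h
          _ = (2^(k+2)+1) * (2^(k+2)+1) := by
              push_cast [Int.toNat_of_nonneg hpos]; ring
      have hR : (F.card : ℝ) ≤ ((2:ℝ)^(k+2)+1) * ((2:ℝ)^(k+2)+1) := by exact_mod_cast hZ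
      have hc : (1:ℝ) ≤ 2^k := by exact_mod_cast Nat.one_le_two_pow
      have ha : (2:ℝ)^(k+2) = 4*2^k := by ring
      have hb : (4:ℝ)^k = (2^k)*(2^k) := by
        rw [show (4:ℝ) = 2^2 by norm_num, ← pow_mul]
        rw [two_mul, pow_add]
      nlinarith
    calc ∑ x ∈ F, (nsq x)⁻¹ ≤ F.card • ((4:ℝ)^k)⁻¹ := Finset.sum_le_card_nsmul _ _ _ hbound
      _ = (F.card : ℝ) * ((4:ℝ)^k)⁻¹ := by rw [nsmul_eq_mul]
      _ ≤ (64 * 4^k) * ((4:ℝ)^k)⁻¹ := by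
          apply mul_le_mul_of_nonneg_right hcard (by positivity)
      _ = 64 := by field_simp
  calc ∑ k ∈ t, ∑ x ∈ (annulus A B).filter (fun x => ⌊Real.logb 2 (enorm2 x)⌋₊ = k), (nsq x)⁻¹
      ≤ ∑ k ∈ t, (64:ℝ) := Finset.sum_le_sum hinner
    _ = 64 * t.card := by rw [Finset.sum_const, nsmul_eq_mul]; ring
    _ ≤ 128 * (Real.log (B / A) + 1) := by
        have hcard : t.card = k₁ + 1 - k₀ := Nat.card_Icc _ _
        have hcard' : (t.card : ℝ) = (k₁:ℝ) + 1 - k₀ := by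
          rw [hcard]; push_cast [Nat.cast_sub (by omega : k₀ ≤ k₁ + 1)]; ring
        have h1 : (k₁:ℝ) ≤ Real.logb 2 B := Nat.floor_le (Real.logb_nonneg h2 (le_trans hA hAB))
        have h0 : Real.logb 2 A - 1 < (k₀:ℝ) := Nat.sub_one_lt_floor _
        have hdiv : Real.logb 2 B - Real.logb 2 A = Real.logb 2 (B/A) := by
          rw [Real.logb_div (by linarith) (by linarith)]
        have hlogb : Real.logb 2 (B/A) = Real.log (B/A) / Real.log 2 := rfl
        have hlognn : 0 ≤ Real.log (B/A) :=
          Real.log_nonneg (by rw [le_div_iff₀ hApos]; linarith)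
        have hl2 : (0.6931471803:ℝ) < Real.log 2 := Real.log_two_gt_d9
        have hle : Real.logb 2 (B/A) ≤ 2 * Real.log (B/A) := by
          rw [hlogb, div_le_iff₀ (by linarith)]
          nlinarith
        rw [hcard']
        nlinarith [hdiv, hle]

set_option maxHeartbeats 1600000 in
/-- Replacing the discontinuous approximation of the identity `φ_{r,δ}` by its continuous
version `ψ_{r,δ}` in the polar empirical measure produces an error of order `δ`, uniformly
over `r ∈ [2δ, b]` and over the configurations, as `T → ∞`. The
`limsup sup ≤ Cδ` statement is formulated with an arbitrary `ε > 0`. -/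
theorem stmt14 (b : ℝ) (hb : 0 < b) :
    ∃ C : ℝ, ∀ δ : ℝ, 0 < δ → δ < b / 2 →
      ∀ ψ : ℝ → ℝ, Continuous ψ →
        (∀ s, 0 ≤ ψ s ∧ ψ s ≤ 1 / (2 * δ)) →
        (∀ s, |s| ≤ δ - δ ^ 2 → ψ s = 1 / (2 * δ)) →
        (∀ s, δ + δ ^ 2 ≤ |s| → ψ s = 0) →
        ∀ ε : ℝ, 0 < ε → ∃ T₀ : ℝ, ∀ T : ℝ, T₀ ≤ T →
          ∀ r : ℝ, 2 * δ ≤ r → r ≤ b →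
            ∀ η : ℤ × ℤ → ℝ, (∀ x, η x = 0 ∨ η x = 1) →
              |polarInt T η (fun s => if |s - r| ≤ δ then 1 / (2 * δ) else 0)
                - polarInt T η (fun s => ψ (s - r))|
                ≤ C * δ + ε := by
  refine ⟨128, ?_⟩
  intro δ hδ hδb ψ hψc hψ01 hψ1 hψ0 ε hε
  refine ⟨Real.exp (max 1 (64 / (δ * ε))), ?_⟩
  intro T hT r hr1 hr2 η hη
  set L := Real.log T with hL
  have hLge : max 1 (64 / (δ * ε)) ≤ L := by
    rw [hL]
    calc max 1 (64/(δ*ε)) = Real.log (Real.exp (max 1 (64/(δ*ε)))) := (Real.log_exp _).symm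
      _ ≤ Real.log T := Real.log_le_log (Real.exp_pos _) hT
  have hL1 : (1:ℝ) ≤ L := le_trans (le_max_left _ _) hLge
  have hLpos : (0:ℝ) < L := by linarith
  have hδ2 : (0:ℝ) < δ^2 := by positivity
  set f₁ : ℝ → ℝ := fun s => if |s - r| ≤ δ then 1 / (2 * δ) else 0 with hf₁
  set f₂ : ℝ → ℝ := fun s => ψ (s - r) with hf₂
  set G₁ : ℤ × ℤ → ℝ := fun x => if x ≠ 0 then η x * f₁ (sig T x) / nsq x else 0 with hG₁
  set G₂ : ℤ × ℤ → ℝ := fun x => if x ≠ 0 then η x * f₂ (sig T x) / nsq x else 0 with hG₂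
  -- translation lemmas
  have hsig_le : ∀ x : ℤ × ℤ, x ≠ 0 → ∀ c : ℝ, sig T x ≤ c →
      enorm2 x ≤ Real.exp (c * L) := by
    intro x hx c hc
    have he1 : 1 ≤ enorm2 x := one_le_enorm2 hx
    have hsig : sig T x = Real.log (enorm2 x) / L := rfl
    rw [hsig, div_le_iff₀ hLpos] at hc
    calc enorm2 x = Real.exp (Real.log (enorm2 x)) := (Real.exp_log (by linarith)).symm
      _ ≤ Real.exp (c * L) := Real.exp_le_exp.mpr hc
  have hsig_ge : ∀ x : ℤ × ℤ, x ≠ 0 → ∀ c : ℝ, c ≤ sig T x →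
      Real.exp (c * L) ≤ enorm2 x := by
    intro x hx c hc
    have he1 : 1 ≤ enorm2 x := one_le_enorm2 hx
    have hsig : sig T x = Real.log (enorm2 x) / L := rfl
    rw [hsig, le_div_iff₀ hLpos] at hc
    calc Real.exp (c * L) ≤ Real.exp (Real.log (enorm2 x)) := Real.exp_le_exp.mpr hc
      _ = enorm2 x := Real.exp_log (by linarith)
  set B₂ : ℝ := Real.exp ((r + δ + δ^2) * L) with hB₂
  set W := annulus 1 B₂ with hWdef
  -- supports
  have hW₁ : ∀ x ∉ W, G₁ x = 0 := by
    intro x hx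
    by_contra h
    have hx0 : x ≠ 0 := by
      intro h0
      rw [hG₁] at h; simp [h0] at h
    have hf : f₁ (sig T x) ≠ 0 := by
      intro h0
      rw [hG₁] at h; simp [hx0, h0] at h
    have hle : sig T x ≤ r + δ := by
      by_contra hgt
      push_neg at hgt
      apply hf
      rw [hf₁]
      simp only
      rw [if_neg]
      rw [not_le]
      calc δ < sig T x - r := by linarith
        _ ≤ |sig T x - r| := le_abs_self _
    exact hx (hWdef ▸ mem_annulus (one_le_enorm2 hx0)
      (hsig_le x hx0 _ (by nlinarith)))
  have hW₂ : ∀ x ∉ W, G₂ x = 0 := by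
    intro x hx
    by_contra h
    have hx0 : x ≠ 0 := by
      intro h0
      rw [hG₂] at h; simp [h0] at h
    have hf : f₂ (sig T x) ≠ 0 := by
      intro h0
      rw [hG₂] at h; simp [hx0, h0] at h
    have hle : sig T x ≤ r + δ + δ^2 := by
      by_contra hgt
      push_neg at hgt
      apply hf
      rw [hf₂]
      simp only
      apply hψ0
      calc δ + δ^2 ≤ sig T x - r := by linarith
        _ ≤ |sig T x - r| := le_abs_self _
    exact hx (hWdef ▸ mem_annulus (one_le_enorm2 hx0) (hsig_le x hx0 _ hle))
  -- the difference as a finite sum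
  have hdiff : polarInt T η f₁ - polarInt T η f₂
      = (1 / (2 * Real.pi * L)) * ∑ x ∈ W, (G₁ x - G₂ x) := by
    rw [polarInt, polarInt, ← hL, ← hG₁, ← hG₂, tsum_eq_sum hW₁, tsum_eq_sum hW₂,
      Finset.sum_sub_distrib, mul_sub]
  -- pointwise bounds
  set P : ℤ × ℤ → Prop :=
    fun x => x ≠ 0 ∧ δ - δ^2 ≤ |sig T x - r| ∧ |sig T x - r| ≤ δ + δ^2 with hP
  have hf₁mem : ∀ s : ℝ, 0 ≤ f₁ s ∧ f₁ s ≤ 1 / (2*δ) := by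
    intro s
    rw [hf₁]
    simp only
    split_ifs
    · exact ⟨by positivity, le_refl _⟩
    · exact ⟨le_refl _, by positivity⟩
  have hzero : ∀ x, ¬ P x → G₁ x - G₂ x = 0 := by
    intro x hx
    rcases eq_or_ne x 0 with h0 | h0
    · rw [hG₁, hG₂]; simp [h0]
    have heq : f₁ (sig T x) = f₂ (sig T x) := by
      simp only [hP] at hx
      push_neg at hx
      rcases le_or_gt (δ - δ^2) (|sig T x - r|) with hlo | hlo
      · have hhi : δ + δ^2 < |sig T x - r| := hx h0 hlo
        have h₁ : f₁ (sig T x) = 0 := by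
          rw [hf₁]; simp only; rw [if_neg]; rw [not_le]; nlinarith
        have h₂ : f₂ (sig T x) = 0 := by
          rw [hf₂]; simp only; exact hψ0 _ (by linarith)
        rw [h₁, h₂]
      · have h₁ : f₁ (sig T x) = 1 / (2*δ) := by
          rw [hf₁]; simp only; rw [if_pos]; nlinarith [abs_nonneg (sig T x - r)]
        have h₂ : f₂ (sig T x) = 1 / (2*δ) := by
          rw [hf₂]; simp only; exact hψ1 _ (by linarith)
        rw [h₁, h₂]
    rw [hG₁, hG₂]
    simp only [h0, if_true, ne_eq, not_false_eq_true, heq]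
    ring
  have hbnd : ∀ x, P x → |G₁ x - G₂ x| ≤ (1/(2*δ)) * (nsq x)⁻¹ := by
    intro x hx
    rw [hP] at hx
    obtain ⟨hx0, -, -⟩ := hx
    have hnsq : (1:ℝ) ≤ nsq x := one_le_nsq hx0
    have habsf : |f₁ (sig T x) - f₂ (sig T x)| ≤ 1/(2*δ) := by
      have h1 := hf₁mem (sig T x)
      have h2 := hψ01 (sig T x - r)
      have h2' : 0 ≤ f₂ (sig T x) ∧ f₂ (sig T x) ≤ 1/(2*δ) := by rw [hf₂]; exact h2
      rw [abs_le]
      constructor <;> [linarith [h1.1, h2'.2]; linarith [h1.2, h2'.1]]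
    rcases hη x with h | h
    · have : G₁ x - G₂ x = 0 := by rw [hG₁, hG₂]; simp [hx0, h]
      rw [this, abs_zero]; positivity
    · have hGe : G₁ x - G₂ x = (f₁ (sig T x) - f₂ (sig T x)) / nsq x := by
        rw [hG₁, hG₂]; simp only [hx0, if_true, ne_eq, not_false_eq_true, h]; ring
      rw [hGe, abs_div, abs_of_pos (by linarith : (0:ℝ) < nsq x), div_eq_mul_inv]
      exact mul_le_mul_of_nonneg_right habsf (by positivity)
  -- the two thin annuli
  set A₁ : ℝ := max 1 (Real.exp ((r - δ - δ^2) * L)) with hA₁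
  set B₁ : ℝ := Real.exp ((r - δ + δ^2) * L) with hB₁
  set A₂ : ℝ := max 1 (Real.exp ((r + δ - δ^2) * L)) with hA₂
  have hsubset : W.filter P ⊆ annulus A₁ B₁ ∪ annulus A₂ B₂ := by
    intro x hx
    rw [Finset.mem_filter, hP] at hx
    obtain ⟨-, hx0, hlo, hhi⟩ := hx
    have he1 : 1 ≤ enorm2 x := one_le_enorm2 hx0
    rw [Finset.mem_union]
    rcases abs_cases (sig T x - r) with ⟨heq, hsgn⟩ | ⟨heq, hsgn⟩
    · right
      refine mem_annulus ?_ ?_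
      · rw [hA₂]
        exact max_le he1 (hsig_ge x hx0 _ (by rw [heq] at hlo; linarith))
      · rw [hB₂]
        exact hsig_le x hx0 _ (by rw [heq] at hhi; linarith)
    · left
      refine mem_annulus ?_ ?_
      · rw [hA₁]
        exact max_le he1 (hsig_ge x hx0 _ (by rw [heq] at hhi; linarith))
      · rw [hB₁]
        exact hsig_le x hx0 _ (by rw [heq] at hlo; linarith)
  -- bounding the annuli sums
  have hannulus : ∀ a bb : ℝ, bb = a + 2*δ^2 → 0 < bb →
      ∑ x ∈ annulus (max 1 (Real.exp (a*L))) (Real.exp (bb*L)), (nsq x)⁻¹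
        ≤ 128 * (2*δ^2*L + 1) := by
    intro a bb hab hbb
    have hAB : max 1 (Real.exp (a*L)) ≤ Real.exp (bb*L) := by
      refine max_le (Real.one_le_exp (by positivity)) (Real.exp_le_exp.mpr ?_)
      nlinarith
    have hkey := annulus_sum_le (max 1 (Real.exp (a*L))) (Real.exp (bb*L))
      (le_max_left _ _) hAB
    refine le_trans hkey ?_
    have hlog : Real.log (Real.exp (bb*L) / max 1 (Real.exp (a*L))) ≤ 2*δ^2*L := by
      rcases le_or_gt 0 a with ha | ha
      · have hmax : max 1 (Real.exp (a*L)) = Real.exp (a*L) :=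
          max_eq_right (Real.one_le_exp (by positivity))
        rw [hmax, ← Real.exp_sub, Real.log_exp]
        nlinarith
      · have hmax : max 1 (Real.exp (a*L)) = 1 :=
          max_eq_left (le_of_lt (Real.exp_lt_one_iff.mpr
            (mul_neg_of_neg_of_pos ha hLpos)))
        rw [hmax, div_one, Real.log_exp]
        nlinarith
    nlinarith
  have hS₁ : ∑ x ∈ annulus A₁ B₁, (nsq x)⁻¹ ≤ 128 * (2*δ^2*L + 1) := by
    rw [hA₁, hB₁]
    exact hannulus (r - δ - δ^2) (r - δ + δ^2) (by ring) (by linarith)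
  have hS₂ : ∑ x ∈ annulus A₂ B₂, (nsq x)⁻¹ ≤ 128 * (2*δ^2*L + 1) := by
    rw [hA₂, hB₂]
    exact hannulus (r + δ - δ^2) (r + δ + δ^2) (by ring) (by linarith)
  -- assembling
  have hsum : ∑ x ∈ W, |G₁ x - G₂ x| ≤ (1/(2*δ)) * (2 * (128 * (2*δ^2*L + 1))) := by
    have h1 : ∑ x ∈ W, |G₁ x - G₂ x| = ∑ x ∈ W.filter P, |G₁ x - G₂ x| := by
      rw [← Finset.sum_filter_add_sum_filter_not W P (fun x => |G₁ x - G₂ x|)]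
      have : ∑ x ∈ W.filter (fun x => ¬ P x), |G₁ x - G₂ x| = 0 := by
        refine Finset.sum_eq_zero fun x hx => ?_
        rw [Finset.mem_filter] at hx
        rw [hzero x hx.2, abs_zero]
      rw [this, add_zero]
    have h2 : ∑ x ∈ W.filter P, |G₁ x - G₂ x|
        ≤ ∑ x ∈ W.filter P, (1/(2*δ)) * (nsq x)⁻¹ := by
      refine Finset.sum_le_sum fun x hx => ?_
      rw [Finset.mem_filter] at hx
      exact hbnd x hx.2
    have h3 : ∑ x ∈ W.filter P, (1/(2*δ)) * (nsq x)⁻¹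
        ≤ ∑ x ∈ annulus A₁ B₁ ∪ annulus A₂ B₂, (1/(2*δ)) * (nsq x)⁻¹ := by
      refine Finset.sum_le_sum_of_subset_of_nonneg hsubset fun x _ hx0 => ?_
      have : (0:ℝ) ≤ nsq x := nsq_nonneg x
      positivity
    have h4 : ∑ x ∈ annulus A₁ B₁ ∪ annulus A₂ B₂, (1/(2*δ)) * (nsq x)⁻¹
        ≤ ∑ x ∈ annulus A₁ B₁, (1/(2*δ)) * (nsq x)⁻¹
          + ∑ x ∈ annulus A₂ B₂, (1/(2*δ)) * (nsq x)⁻¹ := by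
      have := Finset.sum_union_inter (s₁ := annulus A₁ B₁) (s₂ := annulus A₂ B₂)
        (f := fun x => (1/(2*δ)) * (nsq x)⁻¹)
      have hnn : 0 ≤ ∑ x ∈ annulus A₁ B₁ ∩ annulus A₂ B₂, (1/(2*δ)) * (nsq x)⁻¹ := by
        refine Finset.sum_nonneg fun x _ => ?_
        have : (0:ℝ) ≤ nsq x := nsq_nonneg x
        positivity
      linarith
    have h5 : ∑ x ∈ annulus A₁ B₁, (1/(2*δ)) * (nsq x)⁻¹
          + ∑ x ∈ annulus A₂ B₂, (1/(2*δ)) * (nsq x)⁻¹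
        ≤ (1/(2*δ)) * (2 * (128 * (2*δ^2*L + 1))) := by
      rw [← Finset.mul_sum, ← Finset.mul_sum, ← mul_add]
      have h2δ : (0:ℝ) ≤ 1/(2*δ) := by positivity
      nlinarith
    linarith
  -- final arithmetic
  have hπ : (3:ℝ) ≤ Real.pi := by linarith [Real.pi_gt_three]
  have hc : (0:ℝ) < 1 / (2 * Real.pi * L) := by positivity
  have h64 : 64 ≤ δ * ε * L := by
    have := le_trans (le_max_right 1 (64/(δ*ε))) hLge
    rw [div_le_iff₀ (by positivity)] at this
    nlinarith
  calc |polarInt T η f₁ - polarInt T η f₂|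
      = (1 / (2 * Real.pi * L)) * |∑ x ∈ W, (G₁ x - G₂ x)| := by
        rw [hdiff, abs_mul, abs_of_pos hc]
    _ ≤ (1 / (2 * Real.pi * L)) * ∑ x ∈ W, |G₁ x - G₂ x| :=
        mul_le_mul_of_nonneg_left (Finset.abs_sum_le_sum_abs _ _) hc.le
    _ ≤ (1 / (2 * Real.pi * L)) * ((1/(2*δ)) * (2 * (128 * (2*δ^2*L + 1)))) :=
        mul_le_mul_of_nonneg_left hsum hc.le
    _ ≤ 128 * δ + ε := by
        rw [one_div_mul_eq_div, one_div_mul_eq_div, div_div,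
          div_le_iff₀ (by positivity : (0:ℝ) < 2*δ*(2*Real.pi*L))]
        nlinarith [h64, hπ,
          mul_nonneg (sub_nonneg.mpr hπ) (mul_nonneg (mul_nonneg hδ.le hδ.le) hLpos.le),
          mul_nonneg (sub_nonneg.mpr hπ) (le_of_lt (mul_pos (mul_pos hδ hε) hLpos))]
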